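/- arXiv:1903.01271 — 2 statements merged into one kernel-verified Lean document; each statement's English description precedes it below -/
import Mathlib

section
/- Let H and A be Hermitian n×n complex matrices and let Γ = exp(−H)/Tr[exp(−H)]. Then for every s ∈ [0,1], Var^{(0)}_Γ(A) ≤ Var^{(s)}_Γ(A) − (1/2) Tr[[A,H]² Γ], where [A,H] = AH − HA (note that [A,H]² is a negative semidefinite Hermitian matrix, so −(1/2)Tr[[A,H]²Γ] ≥ 0). -/
open Matrix
open scoped ComplexOrder

/-- Functional calculus for Hermitian matrices: apply `f` to the eigenvalues. -/
noncomputable def matFun {n : ℕ} (f : ℝ → ℝ) (M : Matrix (Fin n) (Fin n) ℂ) :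
    Matrix (Fin n) (Fin n) ℂ :=
  if h : M.IsHermitian then
    (h.eigenvectorUnitary : Matrix (Fin n) (Fin n) ℂ) *
      Matrix.diagonal (fun i => (f (h.eigenvalues i) : ℂ)) *
      star (h.eigenvectorUnitary : Matrix (Fin n) (Fin n) ℂ)
  else 0

/-- Spectral power `M ^ s` of a Hermitian matrix, via the functional calculus. -/
noncomputable def matRpow {n : ℕ} (M : Matrix (Fin n) (Fin n) ℂ) (s : ℝ) :
    Matrix (Fin n) (Fin n) ℂ :=
  matFun (fun x => x ^ s) M

/-- The quantum `s`-variance `Var^{(s)}_Γ(A) = Tr[A Γ^s A Γ^{1-s}] - (Tr[A Γ])²`. -/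
noncomputable def qVar {n : ℕ} (Γ A : Matrix (Fin n) (Fin n) ℂ) (s : ℝ) : ℂ :=
  (A * matRpow Γ s * A * matRpow Γ (1 - s)).trace - ((A * Γ).trace) ^ 2

open Unitary

/-! In an eigenbasis `U` of `H`, with eigenvalues `h i`, `B = U⋆ A U` and the Gibbs weights
`e^{a i}`, `a i = -h i - log Z`, every trace in the statement becomes a double sum `∑ |B i j|² c i j`;
for the right-hand side minus the left-hand side,
`c i j = e^{s a j + (1-s) a i} - e^{a i} + (a i - a j)² e^{a i} / 2`.
As `|B i j|²` is symmetric in `i, j`, it suffices that `c i j + c j i ≥ 0`, a two-point inequality: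
`e^a + e^b - e^{sa+(1-s)b} - e^{sb+(1-s)a} = (e^{sa} - e^{sb}) (e^{(1-s)a} - e^{(1-s)b})`,
and for `b ≤ a` the tangent-line bound `e^x - e^y ≤ (x - y) e^x` makes this at most
`s (1-s) (a-b)² e^a`. -/

namespace Real

lemma exp_sub_exp_le_sub_mul_exp (x y : ℝ) : exp x - exp y ≤ (x - y) * exp x := by
  have h := add_one_le_exp (y - x)
  rw [exp_sub, le_div_iff₀ (exp_pos x)] at h
  linarith

lemma exp_add_exp_le_exp_mix_add (a b s : ℝ) (hs0 : 0 ≤ s) (hs1 : s ≤ 1) :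
    exp a + exp b ≤ exp (s * a + (1 - s) * b) + exp (s * b + (1 - s) * a)
      + (a - b) ^ 2 * (exp a + exp b) / 2 := by
  wlog hba : b ≤ a generalizing a b
  · have := this b a (le_of_not_ge hba)
    linarith [sq_nonneg (a - b), sq_nonneg (b - a)]
  have hfactor : exp a + exp b - exp (s * a + (1 - s) * b) - exp (s * b + (1 - s) * a)
      = (exp (s * a) - exp (s * b)) * (exp ((1 - s) * a) - exp ((1 - s) * b)) := by
    simp only [sub_mul, mul_sub, ← exp_add]
    ring_nf
  have hp := exp_sub_exp_le_sub_mul_exp (s * a) (s * b)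
  have hq := exp_sub_exp_le_sub_mul_exp ((1 - s) * a) ((1 - s) * b)
  have hp0 : 0 ≤ exp (s * a) - exp (s * b) :=
    sub_nonneg.2 (exp_le_exp.2 (mul_le_mul_of_nonneg_left hba hs0))
  have hq0 : 0 ≤ exp ((1 - s) * a) - exp ((1 - s) * b) :=
    sub_nonneg.2 (exp_le_exp.2 (mul_le_mul_of_nonneg_left hba (by linarith)))
  have hprod : (exp (s * a) - exp (s * b)) * (exp ((1 - s) * a) - exp ((1 - s) * b))
      ≤ s * (1 - s) * (a - b) ^ 2 * exp a :=
    calc _ ≤ ((s * a - s * b) * exp (s * a)) * (((1 - s) * a - (1 - s) * b) * exp ((1 - s) * a)) :=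
          mul_le_mul hp hq hq0 (hp0.trans hp)
      _ = s * (1 - s) * (a - b) ^ 2 * (exp (s * a) * exp ((1 - s) * a)) := by ring
      _ = s * (1 - s) * (a - b) ^ 2 * exp a := by rw [← exp_add]; ring_nf
  nlinarith [mul_nonneg (sq_nonneg (2 * s - 1)) (mul_nonneg (sq_nonneg (a - b)) (exp_pos a).le),
    mul_nonneg (sq_nonneg (a - b)) (exp_pos b).le]

end Real

lemma Finset.sum_sum_mul_nonneg_of_add_swap_nonneg {ι : Type*} (t : Finset ι) {w c : ι → ι → ℝ}
    (hw : ∀ i j, 0 ≤ w i j) (hw_comm : ∀ i j, w i j = w j i) (hc : ∀ i j, 0 ≤ c i j + c j i) :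
    0 ≤ ∑ i ∈ t, ∑ j ∈ t, w i j * c i j := by
  have hswap : ∑ i ∈ t, ∑ j ∈ t, w i j * c i j = ∑ i ∈ t, ∑ j ∈ t, w i j * c j i := by
    rw [Finset.sum_comm]
    simp only [hw_comm]
  have hsum : 0 ≤ ∑ i ∈ t, ∑ j ∈ t, w i j * (c i j + c j i) :=
    Finset.sum_nonneg fun i _ => Finset.sum_nonneg fun j _ => mul_nonneg (hw i j) (hc i j)
  simp only [mul_add, Finset.sum_add_distrib, ← hswap] at hsum
  linarith

namespace Matrix

lemma IsHermitian.mul_apply_swap_eq_normSq {n : Type*} {H : Matrix n n ℂ} (hH : H.IsHermitian)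
    (i j : n) : H i j * H j i = (Complex.normSq (H i j) : ℂ) := by
  rw [← hH.apply j i]
  exact Complex.mul_conj _

lemma IsHermitian.normSq_apply_comm {n : Type*} {H : Matrix n n ℂ} (hH : H.IsHermitian)
    (i j : n) : Complex.normSq (H i j) = Complex.normSq (H j i) := by
  rw [← hH.apply i j, Complex.star_def, Complex.normSq_conj]

variable {n R : Type*} [Fintype n] [DecidableEq n]

lemma trace_conjStarAlgAut [CommRing R] [StarRing R] (U : unitary (Matrix n n R))
    (X : Matrix n n R) : (conjStarAlgAut R _ U X).trace = X.trace := by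
  rw [conjStarAlgAut_apply, trace_mul_cycle, coe_star_mul_self, one_mul]

lemma trace_mul_diagonal_mul_mul_diagonal [CommSemiring R] (B : Matrix n n R) (a b : n → R) :
    (B * diagonal a * B * diagonal b).trace = ∑ i, ∑ j, B i j * B j i * (a j * b i) := by
  simp only [trace, diag_apply, mul_diagonal, mul_apply (M := B * diagonal a), Finset.sum_mul]
  refine Finset.sum_congr rfl fun i _ => Finset.sum_congr rfl fun j _ => ?_
  ring

lemma trace_commutator_diagonal_sq_mul_diagonal [CommRing R] (B : Matrix n n R) (d g : n → R) :
    ((B * diagonal d - diagonal d * B) ^ 2 * diagonal g).trace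
      = -∑ i, ∑ j, B i j * B j i * ((d i - d j) ^ 2 * g i) := by
  have hC : ∀ i j, (B * diagonal d - diagonal d * B) i j = B i j * (d j - d i) := fun i j => by
    rw [sub_apply, mul_diagonal, diagonal_mul]; ring
  simp only [trace, diag_apply, mul_diagonal, sq]
  simp only [mul_apply, hC, Finset.sum_mul, ← Finset.sum_neg_distrib]
  refine Finset.sum_congr rfl fun i _ => Finset.sum_congr rfl fun j _ => ?_
  ring

noncomputable def gibbsState (H : Matrix n n ℂ) : Matrix n n ℂ :=
  ((NormedSpace.exp (-H)).trace)⁻¹ • NormedSpace.exp (-H)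

namespace IsHermitian

variable {H A B : Matrix n n ℂ}

lemma trace_cfc (hH : H.IsHermitian) (f : ℝ → ℝ) :
    (cfc f H).trace = ∑ i, (f (hH.eigenvalues i) : ℂ) := by
  rw [hH.cfc_eq, IsHermitian.cfc, trace_conjStarAlgAut, trace_diagonal]
  rfl

lemma exp_eq_cfc (hH : H.IsHermitian) : NormedSpace.exp H = cfc Real.exp H := by
  set U : Matrix n n ℂ := (hH.eigenvectorUnitary : Matrix n n ℂ)
  have hUinv : U⁻¹ = star U := inv_eq_left_inv (coe_star_mul_self _)
  have hU : IsUnit U := isUnit_iff_exists.mpr ⟨star U, coe_mul_star_self _, coe_star_mul_self _⟩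
  conv_lhs => rw [hH.spectral_theorem, conjStarAlgAut_apply, ← hUinv, exp_conj _ _ hU]
  rw [exp_diagonal, hH.cfc_eq, IsHermitian.cfc, conjStarAlgAut_apply, hUinv]
  congr 3
  funext i
  simp [← Complex.exp_eq_exp_ℂ, Complex.ofReal_exp]

lemma gibbsState_eq_cfc (hH : H.IsHermitian) : gibbsState H =
    cfc (fun x => Real.exp (-x - Real.log (∑ i, Real.exp (-hH.eigenvalues i)))) H := by
  rcases isEmpty_or_nonempty n with hn | hn
  · exact Subsingleton.elim _ _
  have hexp : NormedSpace.exp (-H) = cfc (fun x => Real.exp (-x)) H := by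
    rw [hH.neg.exp_eq_cfc, ← cfc_comp_neg Real.exp H]
  have hZ : 0 < ∑ i, Real.exp (-hH.eigenvalues i) :=
    Finset.sum_pos (fun i _ => Real.exp_pos _) Finset.univ_nonempty
  rw [gibbsState, hexp, hH.trace_cfc]
  simp only [Real.exp_sub, Real.exp_log hZ, div_eq_inv_mul]
  rw [cfc_const_mul _ _ H, ← Complex.ofReal_sum, ← Complex.ofReal_inv, Complex.coe_smul]

lemma trace_mul_cfc_mul_mul_cfc (hH : H.IsHermitian)
    (hAB : A = conjStarAlgAut ℂ _ hH.eigenvectorUnitary B) (hB : B.IsHermitian) (f g : ℝ → ℝ) :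
    (A * cfc f H * A * cfc g H).trace = ((∑ i, ∑ j, Complex.normSq (B i j) *
      (f (hH.eigenvalues j) * g (hH.eigenvalues i)) : ℝ) : ℂ) := by
  rw [hAB, hH.cfc_eq, hH.cfc_eq, IsHermitian.cfc, IsHermitian.cfc, ← map_mul, ← map_mul,
    ← map_mul, trace_conjStarAlgAut, trace_mul_diagonal_mul_mul_diagonal]
  push_cast
  simp only [hB.mul_apply_swap_eq_normSq, Function.comp_apply]
  rfl

lemma trace_commutator_sq_mul_cfc (hH : H.IsHermitian)
    (hAB : A = conjStarAlgAut ℂ _ hH.eigenvectorUnitary B) (hB : B.IsHermitian) (f : ℝ → ℝ) :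
    ((A * H - H * A) ^ 2 * cfc f H).trace = -((∑ i, ∑ j, Complex.normSq (B i j) *
      ((hH.eigenvalues i - hH.eigenvalues j) ^ 2 * f (hH.eigenvalues i)) : ℝ) : ℂ) := by
  set D := diagonal (RCLike.ofReal ∘ hH.eigenvalues : n → ℂ)
  have hconj : (A * H - H * A) ^ 2 * cfc f H = conjStarAlgAut ℂ _ hH.eigenvectorUnitary
      ((B * D - D * B) ^ 2 * diagonal (RCLike.ofReal ∘ f ∘ hH.eigenvalues)) := by
    rw [map_mul, map_pow, map_sub, map_mul, map_mul, ← hAB, ← hH.spectral_theorem, hH.cfc_eq,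
      IsHermitian.cfc]
  rw [hconj, trace_conjStarAlgAut, trace_commutator_diagonal_sq_mul_diagonal]
  push_cast
  simp only [hB.mul_apply_swap_eq_normSq, Function.comp_apply]
  rfl

end IsHermitian

end Matrix

lemma matFun_eq_cfc {n : ℕ} (f : ℝ → ℝ) {M : Matrix (Fin n) (Fin n) ℂ} (hM : M.IsHermitian) :
    matFun f M = cfc f M := by
  rw [matFun, dif_pos hM, hM.cfc_eq, IsHermitian.cfc, conjStarAlgAut_apply]
  rfl

lemma matRpow_cfc_exp {n : ℕ} {H : Matrix (Fin n) (Fin n) ℂ} (hH : H.IsHermitian) (φ : ℝ → ℝ)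
    (t : ℝ) :
    matRpow (cfc (fun x => Real.exp (φ x)) H) t = cfc (fun x => Real.exp (φ x * t)) H := by
  have hΓ : (cfc (fun x => Real.exp (φ x)) H).IsHermitian := cfc_predicate _ H
  rw [matRpow, matFun_eq_cfc _ hΓ, ← cfc_comp' _ _ H
    ((H.finite_real_spectrum.image _).continuousOn _) (H.finite_real_spectrum.continuousOn _)]
  simp only [Real.exp_mul]

lemma Matrix.IsHermitian.qVar_cfc_exp_sub_qVar_zero {n : ℕ} {H A B : Matrix (Fin n) (Fin n) ℂ}
    (hH : H.IsHermitian) (hAB : A = conjStarAlgAut ℂ _ hH.eigenvectorUnitary B)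
    (hB : B.IsHermitian) (φ : ℝ → ℝ) (s : ℝ) :
    qVar (cfc (fun x => Real.exp (φ x)) H) A s - qVar (cfc (fun x => Real.exp (φ x)) H) A 0
      = ((∑ i, ∑ j, Complex.normSq (B i j) * (Real.exp (s * φ (hH.eigenvalues j)
          + (1 - s) * φ (hH.eigenvalues i)) - Real.exp (φ (hH.eigenvalues i))) : ℝ) : ℂ) := by
  simp only [qVar, matRpow_cfc_exp hH, hH.trace_mul_cfc_mul_mul_cfc hAB hB,
    sub_sub_sub_cancel_right, ← Complex.ofReal_sub, ← Finset.sum_sub_distrib, ← mul_sub,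
    ← Real.exp_add]
  congr 1
  refine Finset.sum_congr rfl fun i _ => Finset.sum_congr rfl fun j _ => ?_
  ring_nf

/-- For Hermitian `H, A` and the Gibbs state `Γ = exp(-H)/Tr[exp(-H)]`, for every `s ∈ [0,1]`,
`Var^{(0)}_Γ(A) ≤ Var^{(s)}_Γ(A) - ½ Tr[[A,H]² Γ]` (in the complex order). -/
theorem qVar_zero_le_qVar_sub_commutator {n : ℕ}
    (H A : Matrix (Fin n) (Fin n) ℂ) (hH : H.IsHermitian) (hA : A.IsHermitian)
    (Γ : Matrix (Fin n) (Fin n) ℂ)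
    (hΓ : Γ = ((NormedSpace.exp (-H)).trace)⁻¹ • NormedSpace.exp (-H))
    (s : ℝ) (hs : s ∈ Set.Icc (0:ℝ) 1) :
    qVar Γ A 0 ≤ qVar Γ A s - (1/2 : ℂ) * ((A * H - H * A) ^ 2 * Γ).trace := by
  obtain ⟨hs0, hs1⟩ := hs
  set B := (conjStarAlgAut ℂ _ hH.eigenvectorUnitary).symm A
  have hAB : A = conjStarAlgAut ℂ _ hH.eigenvectorUnitary B := (StarAlgEquiv.apply_symm_apply _ _).symm
  have hB : B.IsHermitian := IsSelfAdjoint.map hA _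
  rw [show Γ = gibbsState H from hΓ, hH.gibbsState_eq_cfc, ← sub_nonneg, sub_right_comm,
    hH.qVar_cfc_exp_sub_qVar_zero hAB hB, hH.trace_commutator_sq_mul_cfc hAB hB]
  set h := hH.eigenvalues
  set C := Real.log (∑ i, Real.exp (-h i))
  set c : Fin n → Fin n → ℝ := fun i j => Real.exp (s * (-h j - C) + (1 - s) * (-h i - C))
    - Real.exp (-h i - C) + (h i - h j) ^ 2 * Real.exp (-h i - C) / 2
  have hc : ∀ i j, 0 ≤ c i j + c j i := fun i j => by
    have := Real.exp_add_exp_le_exp_mix_add (-h i - C) (-h j - C) s hs0 hs1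
    simp only [c]
    ring_nf at this ⊢
    linarith
  convert Complex.zero_le_real.2 (Finset.univ.sum_sum_mul_nonneg_of_add_swap_nonneg
    (fun i j => Complex.normSq_nonneg (B i j)) hB.normSq_apply_comm hc) using 1
  push_cast
  simp only [Finset.mul_sum, ← Finset.sum_neg_distrib, ← Finset.sum_sub_distrib]
  refine Finset.sum_congr rfl fun i _ => Finset.sum_congr rfl fun j _ => ?_
  simp only [c]
  push_cast
  ring
end

section
/- (Duhamel formula for the matrix exponential.) Let A and B be arbitrary n×n complex matrices. Then the map t ↦ exp(A + tB) is differentiable at t = 0 with derivative ∫₀¹ exp(sA) B exp((1−s)A) ds (a Bochner integral of a continuous matrix-valued function). -/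
/-!
Differentiating `u ↦ exp (u • X) * exp ((1 - u) • Y)` and integrating over `[0, 1]` gives
`exp X - exp Y = ∫₀¹ exp (s • X) * (X - Y) * exp ((1 - s) • Y) ds` in any complete normed
`ℝ`-algebra. Taking `X = A + t • B` and `Y = A`, the difference quotient of `t ↦ exp (A + t • B)`
at `0` is an integral depending continuously on `t`, and its value at `t = 0` is the derivative.
-/

open NormedSpace

theorem hasDerivAt_of_sub_eq_smul {𝕜 E : Type*} [NontriviallyNormedField 𝕜]
    [NormedAddCommGroup E] [NormedSpace 𝕜 E] {f G : 𝕜 → E} {x : 𝕜}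
    (hf : ∀ t, f t - f x = (t - x) • G t) (hG : ContinuousAt G x) : HasDerivAt f (G x) x := by
  refine hasDerivAt_iff_tendsto_slope.mpr <| (hG.tendsto.mono_left nhdsWithin_le_nhds).congr' ?_
  filter_upwards [self_mem_nhdsWithin] with t ht
  rw [slope_def_module, hf, smul_smul, inv_mul_cancel₀ (sub_ne_zero.mpr ht), one_smul]

section RealAlgebra

variable {𝔸 : Type*} [NormedRing 𝔸] [NormedAlgebra ℝ 𝔸] [CompleteSpace 𝔸]

theorem hasDerivAt_exp_smul_mul_exp_one_sub_smul (X Y : 𝔸) (s : ℝ) :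
    HasDerivAt (fun u : ℝ => exp (u • X) * exp ((1 - u) • Y))
      (exp (s • X) * (X - Y) * exp ((1 - s) • Y)) s := by
  have hY : HasDerivAt (fun u : ℝ => exp ((1 - u) • Y)) (-(Y * exp ((1 - s) • Y))) s := by
    simpa [Function.comp_def] using
      (hasDerivAt_exp_smul_const' Y (1 - s)).scomp s ((hasDerivAt_id s).const_sub 1)
  exact ((hasDerivAt_exp_smul_const X s).mul hY).congr_deriv (by noncomm_ring)

theorem exp_sub_exp_eq_integral (X Y : 𝔸) :
    exp X - exp Y = ∫ s in (0:ℝ)..1, exp (s • X) * (X - Y) * exp ((1 - s) • Y) := by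
  have hcont : Continuous fun s : ℝ => exp (s • X) * (X - Y) * exp ((1 - s) • Y) := by
    -- `exp_continuous` is stated for normed `ℚ`-algebras
    let _ : NormedAlgebra ℚ 𝔸 := .restrictScalars ℚ ℝ 𝔸
    fun_prop
  rw [intervalIntegral.integral_eq_sub_of_hasDerivAt
    (fun s _ => hasDerivAt_exp_smul_mul_exp_one_sub_smul X Y s) (hcont.intervalIntegrable 0 1)]
  simp

theorem exp_add_smul_sub_exp (A B : 𝔸) (t : ℝ) :
    exp (A + t • B) - exp A
      = t • ∫ s in (0:ℝ)..1, exp (s • (A + t • B)) * B * exp ((1 - s) • A) := by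
  simp_rw [exp_sub_exp_eq_integral, add_sub_cancel_left, mul_smul_comm, smul_mul_assoc,
    intervalIntegral.integral_smul]

theorem continuous_integral_exp_smul_add_smul (A B : 𝔸) :
    Continuous fun t : ℝ => ∫ s in (0:ℝ)..1, exp (s • (A + t • B)) * B * exp ((1 - s) • A) := by
  let _ : NormedAlgebra ℚ 𝔸 := .restrictScalars ℚ ℝ 𝔸
  exact intervalIntegral.continuous_parametric_intervalIntegral_of_continuous' (by fun_prop) 0 1

theorem hasDerivAt_exp_add_smul (A B : 𝔸) :
    HasDerivAt (fun t : ℝ => exp (A + t • B))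
      (∫ s in (0:ℝ)..1, exp (s • A) * B * exp ((1 - s) • A)) 0 := by
  simpa only [zero_smul, add_zero] using
    hasDerivAt_of_sub_eq_smul (f := fun t : ℝ => exp (A + t • B)) (x := 0)
      (fun t => by simpa only [zero_smul, add_zero, sub_zero] using exp_add_smul_sub_exp A B t)
      (continuous_integral_exp_smul_add_smul A B).continuousAt

end RealAlgebra

-- The additive Frobenius instances are listed last so that the statement below still elaborates
-- with them rather than with the ones derived from the ring and algebra structures.
attribute [local instance] Matrix.frobeniusNormedRing Matrix.frobeniusNormedAlgebra
  Matrix.frobeniusNormedAddCommGroup Matrix.frobeniusNormedSpace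

/-- **Duhamel formula for the matrix exponential.**  For arbitrary `n×n` complex matrices
`A, B`, the map `t ↦ exp(A + tB)` is differentiable at `t = 0` with derivative
`∫₀¹ exp(sA) B exp((1-s)A) ds`. -/
theorem duhamel_formula {n : ℕ} (A B : Matrix (Fin n) (Fin n) ℂ) :
    HasDerivAt (fun t : ℝ => NormedSpace.exp (A + (t : ℂ) • B))
      (∫ s in (0:ℝ)..1,
        NormedSpace.exp ((s : ℂ) • A) * B * NormedSpace.exp ((1 - (s : ℂ)) • A)) 0 := by
  simp only [Complex.coe_smul, ← Complex.ofReal_one, ← Complex.ofReal_sub]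
  exact hasDerivAt_exp_add_smul A B
end
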